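/- arXiv:2311.14882 — 5 statements merged into one kernel-verified Lean document; each statement's English description precedes it below -/
import Mathlib

section
/- Let s ≥ 1 and z₀ ∈ ℝ^s. Set Q = Σ_{r=2}^N Q^r and Ē = Σ_{r=2}^N E^r. Then: (i) Q is positive semidefinite with rank Q = N − 1, and the submatrix of Q on rows and columns {2,…,N} is the (N−1)×(N−1) identity matrix; (ii) u₂(z₀)ᵀ Q u₂(z₀) = 0; (iii) for every z ∈ ℝ^s, u₂(z)ᵀ Q u₂(z) − u₂(z₀)ᵀ Q u₂(z₀) = (u₂(z) − u₂(z₀))ᵀ Ē (u₂(z) − u₂(z₀)) = u₂(z)ᵀ Q u₂(z), so that Γ = Q itself is a positive semidefinite Gram matrix of rank N − 1 for the polynomial z ↦ u₂(z)ᵀ Q u₂(z) − u₂(z₀)ᵀ Q u₂(z₀). -/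
/-! For `r ≠ 1`, `Q^r = v_r v_rᵀ` with `v_r = e_r - (u₂ z₀)_r e_1`, so
`xᵀ Q x = ∑_{r ≠ 1} (x_r - (u₂ z₀)_r x_1)²`. This sum of squares gives positive
semidefiniteness, and since `(u₂ z)_1 = 1` it equals `(u₂ z - u₂ z₀)ᵀ Ē (u₂ z - u₂ z₀)` at
`x = u₂ z` and vanishes at `x = u₂ z₀`; by semidefiniteness `Q u₂ z₀ = 0`. Conversely the rows
`r ≠ 1` of `Q x = 0` read `x_r = (u₂ z₀)_r x_1`, so the kernel of `Q` is the line through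
`u₂ z₀` and the rank is `N - 1`. -/

open Matrix

noncomputable section

/-- Index set for the monomials of degree at most `2` in `s` variables: pairs
`(i, j)` with `i ≤ j` in `Fin (s+1)`, where index `0` stands for the constant `1`.
Its cardinality is `N = (s+1)(s+2)/2`. -/
abbrev MonIdx (s : ℕ) := {p : Fin (s + 1) × Fin (s + 1) // p.1 ≤ p.2}

/-- The index of the constant monomial `1` (the "first" entry of `u₂`). -/
def idx1 (s : ℕ) : MonIdx s := ⟨(0, 0), le_refl _⟩

/-- Extended variable vector: `extv z 0 = 1` and `extv z (i+1) = z i`. -/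
def extv {s : ℕ} (z : Fin s → ℝ) : Fin (s + 1) → ℝ := Fin.cons 1 z

/-- `u₂ z` : the vector of all monomials of degree at most `2` in `z`;
its entry at `⟨(i, j), _⟩` is `z_i z_j` (with the convention `z_0 = 1`). -/
def u2 {s : ℕ} (z : Fin s → ℝ) : MonIdx s → ℝ := fun p => extv z p.1.1 * extv z p.1.2

/-- `E^r` : the diagonal matrix whose `(r, r)` entry is `1` and all others are `0`. -/
def Emat {s : ℕ} (r : MonIdx s) : Matrix (MonIdx s) (MonIdx s) ℝ :=
  Matrix.single r r 1

/-- `Q^r` : the symmetric matrix whose only nonzero entries are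
`[Q^r]₁₁ = ((u₂ z₀)ᵣ)²`, `[Q^r]₁ᵣ = [Q^r]ᵣ₁ = -(u₂ z₀)ᵣ` and `[Q^r]ᵣᵣ = 1`. -/
def Qmat {s : ℕ} (z₀ : Fin s → ℝ) (r : MonIdx s) : Matrix (MonIdx s) (MonIdx s) ℝ :=
  Matrix.single (idx1 s) (idx1 s) ((u2 z₀ r) ^ 2)
    + Matrix.single (idx1 s) r (-(u2 z₀ r))
    + Matrix.single r (idx1 s) (-(u2 z₀ r))
    + Matrix.single r r 1

/-- `Q = Σ_{r ≠ 1} Q^r`. -/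
def Qsum {s : ℕ} (z₀ : Fin s → ℝ) : Matrix (MonIdx s) (MonIdx s) ℝ :=
  ∑ r ∈ Finset.univ.filter (fun r => r ≠ idx1 s), Qmat z₀ r

/-- `Ē = Σ_{r ≠ 1} E^r`. -/
def Ebar (s : ℕ) : Matrix (MonIdx s) (MonIdx s) ℝ :=
  ∑ r ∈ Finset.univ.filter (fun r => r ≠ idx1 s), Emat r

namespace Matrix

theorem dotProduct_single_mulVec {ι α : Type*} [Fintype ι] [DecidableEq ι] [CommSemiring α]
    (x : ι → α) (i j : ι) (c : α) : x ⬝ᵥ (single i j c *ᵥ x) = c * x i * x j := by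
  rw [single_mulVec_eq, dotProduct_smul, dotProduct_single, smul_eq_mul, mul_one]
  ring

theorem rank_eq_card_sub_one_of_ker_eq_span {m n K : Type*} [Fintype n] [Field K]
    {A : Matrix m n K} {v : n → K} (hv : v ≠ 0)
    (hA : LinearMap.ker A.mulVecLin = K ∙ v) : A.rank = Fintype.card n - 1 := by
  have h := LinearMap.finrank_range_add_finrank_ker A.mulVecLin
  rw [hA, finrank_span_singleton hv, Module.finrank_fintype_fun_eq_card] at h
  rw [rank]
  omega

end Matrix

section

variable {s : ℕ}

lemma u2_idx1 (z : Fin s → ℝ) : u2 z (idx1 s) = 1 := by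
  simp [u2, idx1, extv]

lemma u2_ne_zero (z : Fin s → ℝ) : u2 z ≠ 0 :=
  fun h => by simpa [u2_idx1] using congrFun h (idx1 s)

lemma transpose_Qmat (z₀ : Fin s → ℝ) (r : MonIdx s) : (Qmat z₀ r)ᵀ = Qmat z₀ r := by
  simp only [Qmat, transpose_add, transpose_single]
  abel

lemma isHermitian_Qsum (z₀ : Fin s → ℝ) : (Qsum z₀).IsHermitian := by
  rw [IsHermitian, conjTranspose_eq_transpose_of_trivial, Qsum, transpose_sum]
  simp only [transpose_Qmat]

lemma dotProduct_Qmat_mulVec (z₀ : Fin s → ℝ) (r : MonIdx s) (x : MonIdx s → ℝ) :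
    x ⬝ᵥ (Qmat z₀ r *ᵥ x) = (x r - u2 z₀ r * x (idx1 s)) ^ 2 := by
  simp only [Qmat, add_mulVec, dotProduct_add, dotProduct_single_mulVec]
  ring

lemma dotProduct_Qsum_mulVec (z₀ : Fin s → ℝ) (x : MonIdx s → ℝ) :
    x ⬝ᵥ (Qsum z₀ *ᵥ x) =
      ∑ r ∈ Finset.univ.filter (fun r => r ≠ idx1 s), (x r - u2 z₀ r * x (idx1 s)) ^ 2 := by
  simp only [Qsum, sum_mulVec, dotProduct_sum, dotProduct_Qmat_mulVec]

lemma dotProduct_Ebar_mulVec (x : MonIdx s → ℝ) :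
    x ⬝ᵥ (Ebar s *ᵥ x) = ∑ r ∈ Finset.univ.filter (fun r => r ≠ idx1 s), x r ^ 2 := by
  simp only [Ebar, Emat, sum_mulVec, dotProduct_sum, dotProduct_single_mulVec]
  ring_nf

lemma posSemidef_Qsum (z₀ : Fin s → ℝ) : (Qsum z₀).PosSemidef :=
  .of_dotProduct_mulVec_nonneg (isHermitian_Qsum z₀) fun x => by
    rw [star_trivial, dotProduct_Qsum_mulVec]
    exact Finset.sum_nonneg fun r _ => sq_nonneg _

lemma dotProduct_Qsum_mulVec_u2 (z₀ : Fin s → ℝ) : u2 z₀ ⬝ᵥ (Qsum z₀ *ᵥ u2 z₀) = 0 := by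
  simp [dotProduct_Qsum_mulVec, u2_idx1]

lemma Qsum_mulVec_u2 (z₀ : Fin s → ℝ) : Qsum z₀ *ᵥ u2 z₀ = 0 :=
  ((posSemidef_Qsum z₀).dotProduct_mulVec_zero_iff _).mp (dotProduct_Qsum_mulVec_u2 z₀)

lemma Qsum_mulVec_apply_of_ne (z₀ : Fin s → ℝ) (x : MonIdx s → ℝ) {p : MonIdx s}
    (hp : p ≠ idx1 s) : (Qsum z₀ *ᵥ x) p = x p - u2 z₀ p * x (idx1 s) := by
  have hQmat (r : MonIdx s) : (Qmat z₀ r *ᵥ x) p =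
      Pi.single (M := fun _ => ℝ) r (x r - u2 z₀ r * x (idx1 s)) p := by
    simp only [Qmat, add_mulVec, single_mulVec_eq, Pi.add_apply, Pi.smul_apply,
      Pi.single_apply, hp, if_false]
    split_ifs <;> ring
  simp only [Qsum, sum_mulVec, Finset.sum_apply, hQmat]
  rw [Finset.sum_pi_single (f := fun r => x r - u2 z₀ r * x (idx1 s))]
  simp [hp]

lemma Qsum_apply_of_ne (z₀ : Fin s → ℝ) {p q : MonIdx s} (hp : p ≠ idx1 s) (hq : q ≠ idx1 s) :
    Qsum z₀ p q = if p = q then 1 else 0 := by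
  simpa [Pi.single_apply, hq.symm] using Qsum_mulVec_apply_of_ne z₀ (Pi.single q 1) hp

lemma ker_Qsum (z₀ : Fin s → ℝ) :
    LinearMap.ker (Qsum z₀).mulVecLin = ℝ ∙ u2 z₀ := by
  ext x
  rw [LinearMap.mem_ker, mulVecLin_apply, Submodule.mem_span_singleton]
  constructor
  · intro hx
    refine ⟨x (idx1 s), funext fun q => ?_⟩
    by_cases hq : q = idx1 s
    · simp [hq, u2_idx1]
    · have := Qsum_mulVec_apply_of_ne z₀ x hq
      rw [hx, Pi.zero_apply] at this
      simp only [Pi.smul_apply, smul_eq_mul]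
      linarith
  · rintro ⟨c, rfl⟩
    rw [mulVec_smul, Qsum_mulVec_u2, smul_zero]

end

theorem stmt3_general (s : ℕ) (z₀ : Fin s → ℝ) :
    (Qsum z₀).PosSemidef ∧
    (Qsum z₀).rank = Fintype.card (MonIdx s) - 1 ∧
    (∀ p q : MonIdx s, p ≠ idx1 s → q ≠ idx1 s →
        Qsum z₀ p q = if p = q then 1 else 0) ∧
    u2 z₀ ⬝ᵥ (Qsum z₀ *ᵥ u2 z₀) = 0 ∧
    ∀ z : Fin s → ℝ,
      (u2 z ⬝ᵥ (Qsum z₀ *ᵥ u2 z) - u2 z₀ ⬝ᵥ (Qsum z₀ *ᵥ u2 z₀) =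
        (u2 z - u2 z₀) ⬝ᵥ (Ebar s *ᵥ (u2 z - u2 z₀))) ∧
      (u2 z ⬝ᵥ (Qsum z₀ *ᵥ u2 z) - u2 z₀ ⬝ᵥ (Qsum z₀ *ᵥ u2 z₀) =
        u2 z ⬝ᵥ (Qsum z₀ *ᵥ u2 z)) := by
  refine ⟨posSemidef_Qsum z₀,
    rank_eq_card_sub_one_of_ker_eq_span (u2_ne_zero z₀) (ker_Qsum z₀),
    fun p q => Qsum_apply_of_ne z₀, dotProduct_Qsum_mulVec_u2 z₀, fun z => ?_⟩
  rw [dotProduct_Qsum_mulVec_u2, sub_zero, dotProduct_Qsum_mulVec, dotProduct_Ebar_mulVec]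
  exact ⟨by simp only [Pi.sub_apply, u2_idx1, mul_one], rfl⟩

/-- (i) `Q` is PSD of rank `N − 1` and its submatrix on rows/columns `≠ 1` is
the identity; (ii) `u₂(z₀)ᵀ Q u₂(z₀) = 0`; (iii) the quadratic-form difference equals the
`Ē`-form at `u₂(z) − u₂(z₀)` and equals `u₂(z)ᵀ Q u₂(z)`, so `Γ = Q` is a PSD Gram matrix
of rank `N − 1` for this polynomial. -/
theorem stmt3 (s : ℕ) (hs : 1 ≤ s) (z₀ : Fin s → ℝ) :
    (Qsum z₀).PosSemidef ∧
    (Qsum z₀).rank = Fintype.card (MonIdx s) - 1 ∧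
    (∀ p q : MonIdx s, p ≠ idx1 s → q ≠ idx1 s →
        Qsum z₀ p q = if p = q then 1 else 0) ∧
    u2 z₀ ⬝ᵥ (Qsum z₀ *ᵥ u2 z₀) = 0 ∧
    ∀ z : Fin s → ℝ,
      (u2 z ⬝ᵥ (Qsum z₀ *ᵥ u2 z) - u2 z₀ ⬝ᵥ (Qsum z₀ *ᵥ u2 z₀) =
        (u2 z - u2 z₀) ⬝ᵥ (Ebar s *ᵥ (u2 z - u2 z₀))) ∧
      (u2 z ⬝ᵥ (Qsum z₀ *ᵥ u2 z) - u2 z₀ ⬝ᵥ (Qsum z₀ *ᵥ u2 z₀) =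
        u2 z ⬝ᵥ (Qsum z₀ *ᵥ u2 z)) :=
  stmt3_general s z₀
end
end

section
/- Let s ≥ 1, z₀ ∈ ℝ^s, and Q = Σ_{r=2}^N Q^r. Then for every ρ ∈ ℝ and every positive semidefinite matrix Δ ∈ ℝ^{N×N}, the symmetric matrix Γ = Q − ρ E¹ + Δ satisfies rank Γ ≥ N − 1. -/
open Matrix

noncomputable section

/-!
Apart from its `(r, r)` entry `1`, every `Qʳ` lives in the row and column of the constant
monomial, as does `ρ E¹`. Deleting that row and column therefore turns `Γ` into `I + Δ'`
with `Δ'` a principal submatrix of `Δ`, hence positive semidefinite; so this `(N-1) × (N-1)`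
principal submatrix is positive definite, hence invertible, and bounds the rank of `Γ` from below.
-/

namespace Matrix

variable {n m R : Type*} [Fintype n] [Fintype m] [DecidableEq m] [CommSemiring R]
  [StrongRankCondition R]

lemma card_le_rank_of_isUnit_submatrix (A : Matrix n n R) (f : m → n)
    (h : IsUnit (A.submatrix f f)) : Fintype.card m ≤ A.rank :=
  (rank_of_isUnit _ h).symm.le.trans (rank_submatrix_le A f f)

end Matrix

variable {s : ℕ}

lemma Qmat_apply_of_ne_idx1 (z₀ : Fin s → ℝ) (r : MonIdx s) {a b : MonIdx s}
    (ha : a ≠ idx1 s) (hb : b ≠ idx1 s) : Qmat z₀ r a b = Emat r a b := by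
  simp only [Qmat, Emat, Matrix.add_apply, single_apply_of_row_ne ha.symm,
    single_apply_of_col_ne _ _ hb.symm, zero_add]

lemma Qsum_apply_of_ne_idx1 (z₀ : Fin s → ℝ) {a b : MonIdx s}
    (ha : a ≠ idx1 s) (hb : b ≠ idx1 s) :
    Qsum z₀ a b = (1 : Matrix (MonIdx s) (MonIdx s) ℝ) a b := by
  rw [Qsum, Matrix.sum_apply, Finset.sum_congr rfl fun r _ => Qmat_apply_of_ne_idx1 z₀ r ha hb,
    Finset.sum_eq_single_of_mem a (by simpa using ha) fun r _ hra => by simp [Emat, hra]]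
  simp [Emat, single_apply, one_apply]

lemma submatrix_Qsum_sub_smul_Emat (z₀ : Fin s → ℝ) (ρ : ℝ) :
    (Qsum z₀ - ρ • Emat (idx1 s)).submatrix (Subtype.val : {r // r ≠ idx1 s} → MonIdx s)
      (Subtype.val : {r // r ≠ idx1 s} → MonIdx s) = 1 := by
  ext a b
  simp [Qsum_apply_of_ne_idx1 z₀ a.2 b.2, Emat, single_apply_of_row_ne (Ne.symm a.2),
    one_apply, Subtype.ext_iff]

theorem stmt6_general (s : ℕ) (z₀ : Fin s → ℝ) (ρ : ℝ)
    (Δ : Matrix (MonIdx s) (MonIdx s) ℝ) (hΔ : Δ.PosSemidef) :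
    Fintype.card (MonIdx s) - 1 ≤ (Qsum z₀ - ρ • Emat (idx1 s) + Δ).rank := by
  let f : {r : MonIdx s // r ≠ idx1 s} → MonIdx s := Subtype.val
  have hpd : ((Qsum z₀ - ρ • Emat (idx1 s) + Δ).submatrix f f).PosDef := by
    rw [submatrix_add, Pi.add_apply, Pi.add_apply, submatrix_Qsum_sub_smul_Emat]
    exact PosDef.one.add_posSemidef (hΔ.submatrix f)
  calc Fintype.card (MonIdx s) - 1 = Fintype.card {r : MonIdx s // r ≠ idx1 s} := by
        simp [Fintype.card_subtype_compl]
    _ ≤ _ := card_le_rank_of_isUnit_submatrix _ f hpd.isUnit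

/-- for every `ρ ∈ ℝ` and every positive semidefinite `Δ`, the matrix
`Γ = Q − ρ E¹ + Δ` satisfies `rank Γ ≥ N − 1`. -/
theorem stmt6 (s : ℕ) (hs : 1 ≤ s) (z₀ : Fin s → ℝ) (ρ : ℝ)
    (Δ : Matrix (MonIdx s) (MonIdx s) ℝ) (hΔ : Δ.PosSemidef) :
    Fintype.card (MonIdx s) - 1 ≤ (Qsum z₀ - ρ • Emat (idx1 s) + Δ).rank :=
  stmt6_general s z₀ ρ Δ hΔ
end
end

section
/- Let s ≥ 1 and let c ∈ ℝ^s have all entries nonzero. Let i₁,…,i_L ∈ {1,…,s} be a chain of indices and define the polynomials g₁ = z_{i₁} − c_{i₁} and g_ℓ = z_{i_{ℓ−1}} z_{i_ℓ} − c_{i_{ℓ−1}} c_{i_ℓ} for ℓ = 2,…,L in ℝ[z₁,…,z_s]. Then for every ℓ ∈ {1,…,L} there exist polynomials λ₁,…,λ_ℓ ∈ ℝ[z₁,…,z_s], each of total degree at most 1, such that z_{i_ℓ} − c_{i_ℓ} = Σ_{ℓ'=1}^{ℓ} λ_{ℓ'} g_{ℓ'}. -/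
open MvPolynomial Finset


/-- for a chain of constraints `g₁ = z_{i₁} − c_{i₁}`,
`g_ℓ = z_{i_{ℓ−1}} z_{i_ℓ} − c_{i_{ℓ−1}} c_{i_ℓ}` (with all `c_i ≠ 0`), for every `ℓ`
the polynomial `z_{i_ℓ} − c_{i_ℓ}` is a combination `Σ_{ℓ' ≤ ℓ} λ_{ℓ'} g_{ℓ'}` with
multipliers `λ_{ℓ'}` of total degree at most `1`. -/
theorem stmt8 (s : ℕ) (hs : 1 ≤ s) (c : Fin s → ℝ) (hc : ∀ i, c i ≠ 0)
    (L : ℕ) (hL : 0 < L) (idx : Fin L → Fin s)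
    (g : Fin L → MvPolynomial (Fin s) ℝ)
    (hg0 : g ⟨0, hL⟩ = MvPolynomial.X (idx ⟨0, hL⟩) - MvPolynomial.C (c (idx ⟨0, hL⟩)))
    (hg : ∀ ℓ : Fin L, 0 < ℓ.val →
        g ℓ =
          MvPolynomial.X (idx ⟨ℓ.val - 1, lt_of_le_of_lt (Nat.sub_le ℓ.val 1) ℓ.isLt⟩) *
              MvPolynomial.X (idx ℓ) -
            MvPolynomial.C
              (c (idx ⟨ℓ.val - 1, lt_of_le_of_lt (Nat.sub_le ℓ.val 1) ℓ.isLt⟩) * c (idx ℓ))) :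
    ∀ ℓ : Fin L, ∃ lam : Fin L → MvPolynomial (Fin s) ℝ,
      (∀ k, (lam k).totalDegree ≤ 1) ∧
      MvPolynomial.X (idx ℓ) - MvPolynomial.C (c (idx ℓ)) =
        ∑ k ∈ Finset.univ.filter (fun k => k ≤ ℓ), lam k * g k := by
  have hdegCX : ∀ (r : ℝ) (j : Fin s), (C r * X j : MvPolynomial (Fin s) ℝ).totalDegree ≤ 1 :=
    fun r j => le_trans (totalDegree_mul _ _) (by simp)
  intro ℓ
  obtain ⟨n, hn⟩ := ℓ
  induction n using Nat.strong_induction_on with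
  | _ n IH =>
  rcases n with _ | _ | m
  · -- n = 0
    refine ⟨fun k => if k = ⟨0, hn⟩ then 1 else 0, ?_, ?_⟩
    · intro k; dsimp only; split <;> simp
    · have hfil : Finset.univ.filter (fun k => k ≤ (⟨0, hn⟩ : Fin L)) = {⟨0, hn⟩} := by
        ext k; simp [Fin.le_def, Fin.ext_iff, Nat.le_zero]
      rw [hfil, Finset.sum_singleton]
      dsimp only
      rw [if_pos rfl, one_mul, hg0]
  · -- n = 1
    set i0 : Fin L := ⟨0, by omega⟩ with hi0
    set i1 : Fin L := ⟨1, hn⟩ with hi1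
    have hne : i0 ≠ i1 := by simp [hi0, hi1, Fin.ext_iff]
    refine ⟨fun k => if k = i1 then C (c (idx i0))⁻¹
        else if k = i0 then -(C (c (idx i0))⁻¹ * X (idx i1)) else 0, ?_, ?_⟩
    · intro k
      dsimp only
      split_ifs
      · simp
      · simpa using hdegCX _ _
      · simp
    · have hfil : Finset.univ.filter (fun k => k ≤ i1) = {i0, i1} := by
        ext k; simp only [Finset.mem_filter, Finset.mem_univ, true_and, Fin.le_def,
          Finset.mem_insert, Finset.mem_singleton, Fin.ext_iff, hi0, hi1]
        omega
      rw [hfil, Finset.sum_pair hne]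
      dsimp only
      rw [if_neg hne, if_pos rfl, if_pos rfl]
      have hge : g i1 = X (idx i0) * X (idx i1) - C (c (idx i0) * c (idx i1)) :=
        hg i1 (by simp [hi1])
      rw [hge, hg0, map_mul]
      have hA : (C (c (idx i0)) : MvPolynomial (Fin s) ℝ) * C (c (idx i0))⁻¹ = 1 := by
        rw [← map_mul, mul_inv_cancel₀ (hc _), map_one]
      linear_combination (C (c (idx i1)) - X (idx i1)) * hA
  · -- n = m + 2
    obtain ⟨lam, hdeg, heq⟩ := IH m (by omega) (by omega)
    set i0 : Fin L := ⟨m, by omega⟩ with hi0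
    set i1 : Fin L := ⟨m + 1, by omega⟩ with hi1
    set i2 : Fin L := ⟨m + 2, hn⟩ with hi2
    set a := c (idx i0) with ha
    set b := c (idx i1) with hb
    set d := c (idx i2) with hd
    refine ⟨fun k => if k = i2 then C (a⁻¹ * b⁻¹) * X (idx i0)
        else if k = i1 then -(C (a⁻¹ * b⁻¹) * X (idx i2))
        else C (d * a⁻¹) * lam k, ?_, ?_⟩
    · intro k
      dsimp only
      split_ifs
      · exact hdegCX _ _
      · rw [totalDegree_neg]; exact hdegCX _ _
      · exact le_trans (totalDegree_mul _ _)
          (by rw [totalDegree_C]; simpa using hdeg k)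
    · have h12 : i1 ≠ i2 := by simp [hi1, hi2, Fin.ext_iff]
      have hfil : Finset.univ.filter (fun k => k ≤ i2)
          = insert i2 (insert i1 (Finset.univ.filter (fun k => k ≤ i0))) := by
        ext k; simp only [Finset.mem_filter, Finset.mem_univ, true_and, Fin.le_def,
          Finset.mem_insert, Fin.ext_iff, hi0, hi1, hi2]
        omega
      have hni2 : i2 ∉ insert i1 (Finset.univ.filter (fun k => k ≤ i0)) := by
        simp only [Finset.mem_insert, Finset.mem_filter, Finset.mem_univ, true_and,
          Fin.le_def, Fin.ext_iff, hi0, hi1, hi2]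
        omega
      have hni1 : i1 ∉ Finset.univ.filter (fun k => k ≤ i0) := by
        simp only [Finset.mem_filter, Finset.mem_univ, true_and, Fin.le_def, hi0, hi1]
        omega
      rw [hfil, Finset.sum_insert hni2, Finset.sum_insert hni1]
      dsimp only
      rw [if_pos rfl, if_neg h12, if_pos rfl]
      have hcong : ∀ k ∈ Finset.univ.filter (fun k => k ≤ i0),
          (if k = i2 then C (a⁻¹ * b⁻¹) * X (idx i0)
            else if k = i1 then -(C (a⁻¹ * b⁻¹) * X (idx i2))
            else C (d * a⁻¹) * lam k) * g k = C (d * a⁻¹) * (lam k * g k) := by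
        intro k hk
        simp only [Finset.mem_filter, Finset.mem_univ, true_and, Fin.le_def, hi0] at hk
        have h1 : k ≠ i2 := fun he => by
          have := congrArg Fin.val he; simp only [hi2] at this; omega
        have h2 : k ≠ i1 := fun he => by
          have := congrArg Fin.val he; simp only [hi1] at this; omega
        rw [if_neg h1, if_neg h2, mul_assoc]
      rw [Finset.sum_congr rfl hcong, ← Finset.mul_sum, ← heq]
      have hge2 : g i2 = X (idx i1) * X (idx i2) - C (b * d) :=
        hg i2 (by simp [hi2])
      have hge1 : g i1 = X (idx i0) * X (idx i1) - C (a * b) :=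
        hg i1 (by simp [hi1])
      rw [hge2, hge1]
      simp only [map_mul]
      have hA : (C a : MvPolynomial (Fin s) ℝ) * C a⁻¹ = 1 := by
        rw [← map_mul, mul_inv_cancel₀ (hc _), map_one]
      have hB : (C b : MvPolynomial (Fin s) ℝ) * C b⁻¹ = 1 := by
        rw [← map_mul, mul_inv_cancel₀ (hc _), map_one]
      linear_combination (C d - X (idx i2)) * hA
        + (C d * C a⁻¹ * X (idx i0) - X (idx i2) * C a * C a⁻¹) * hB
end

section
/- Let s ≥ 1 and N = (s+1)(s+2)/2, let c ∈ ℝ^s have all entries nonzero, and let h₁,…,h_K ∈ ℝ[z₁,…,z_s] with each h_k of the form h_k(z) = z_{a_k} z_{b_k} − c_{a_k} c_{b_k} for indices a_k, b_k ∈ {0,1,…,s} (with the convention z₀ := 1 and c₀ := 1). Suppose that for each i ∈ {1,…,s} there exist polynomials λ^{(i)}₁,…,λ^{(i)}_K of total degree at most 1 with z_i − c_i = Σ_{k=1}^K λ^{(i)}_k h_k. Then there exists a positive semidefinite matrix U ∈ ℝ^{KN×KN} such that for all z ∈ ℝ^s: Σ_{i=1}^s (z_i − c_i)² + Σ_{1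 ≤ i ≤ j ≤ s} (z_i z_j − c_i c_j)² = (h(z) ⊗ u₂(z))ᵀ U (h(z) ⊗ u₂(z)). -/
/-! Each hypothesis `z_i - c_i = ∑ λ_k h_k` with `deg λ_k ≤ 1`, together with
`z_i z_j - c_i c_j = z_i (z_j - c_j) + c_j (z_i - c_i)`, writes every residual on the left-hand
side as `∑ μ_k h_k` with `deg μ_k ≤ 2`. Expanding each `μ_k` in the monomials `u₂(z)` turns such a
combination into a linear form `w ⬝ᵥ (h(z) ⊗ u₂(z))`, so the left-hand side is a sum of squares of
linear forms in `h(z) ⊗ u₂(z)`, i.e. a quadratic form with a Gram matrix `Gᵀ G ⪰ 0`. -/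

open Matrix

noncomputable section

/-- Kronecker product of two vectors: `(v ⊗ u)_{(k,t)} = v_k u_t`. -/
def kron {K N : Type*} (v : K → ℝ) (u : N → ℝ) : K × N → ℝ := fun p => v p.1 * u p.2
/-- Extended polynomial variables: `Xe 0 = 1` and `Xe (i+1) = X i`
(the convention `z₀ := 1`). -/
def Xe {s : ℕ} : Fin (s + 1) → MvPolynomial (Fin s) ℝ := Fin.cons 1 MvPolynomial.X

/-- Extended constants: `ce c 0 = 1` and `ce c (i+1) = c i` (the convention `c₀ := 1`). -/
def ce {s : ℕ} (c : Fin s → ℝ) : Fin (s + 1) → ℝ := Fin.cons 1 c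

open MvPolynomial

lemma eval_Xe {s : ℕ} (z : Fin s → ℝ) (i : Fin (s + 1)) : eval z (Xe i) = extv z i := by
  cases i using Fin.cases <;> simp [Xe, extv]

lemma exists_monomial_one_eq_Xe_mul_Xe {s : ℕ} (d : Fin s →₀ ℕ) (hd : (d.sum fun _ e => e) ≤ 2) :
    ∃ i j : Fin (s + 1), monomial d (1 : ℝ) = Xe i * Xe j := by
  obtain ⟨m, rfl⟩ := Multiset.toFinsupp.surjective d
  replace hd : Multiset.card m ≤ 2 := (Multiset.toFinsupp_sum_eq m).symm.trans_le hd
  interval_cases hm : Multiset.card m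
  · rw [Multiset.card_eq_zero.mp hm]
    exact ⟨0, 0, by simp [Xe]⟩
  · obtain ⟨i, rfl⟩ := Multiset.card_eq_one.mp hm
    exact ⟨0, i.succ, by simp [Xe, X]⟩
  · obtain ⟨i, j, rfl⟩ := Multiset.card_eq_two.mp hm
    refine ⟨i.succ, j.succ, ?_⟩
    rw [Multiset.insert_eq_cons, ← Multiset.singleton_add, Multiset.toFinsupp_add,
      ← mul_one (1 : ℝ), ← monomial_mul]
    simp [Xe, X]

lemma mem_span_Xe_mul_Xe {s : ℕ} (p : MvPolynomial (Fin s) ℝ) (hp : p.totalDegree ≤ 2) :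
    p ∈ Submodule.span ℝ (Set.range fun t : MonIdx s => Xe t.1.1 * Xe t.1.2) := by
  rw [p.as_sum]
  refine Submodule.sum_mem _ fun d hd => ?_
  obtain ⟨i, j, hij⟩ := exists_monomial_one_eq_Xe_mul_Xe d ((le_totalDegree hd).trans hp)
  have hmin_max : Xe (min i j) * Xe (max i j) = Xe i * Xe j := by
    rcases le_total i j with hle | hle <;> simp [hle, mul_comm]
  rw [← mul_one (p.coeff d), ← smul_eq_mul, ← smul_monomial, hij]
  exact Submodule.smul_mem _ _
    (Submodule.subset_span ⟨⟨(min i j, max i j), min_le_max⟩, hmin_max⟩)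

lemma exists_eval_eq_dotProduct_u2 {s : ℕ} (p : MvPolynomial (Fin s) ℝ) (hp : p.totalDegree ≤ 2) :
    ∃ v : MonIdx s → ℝ, ∀ z, eval z p = v ⬝ᵥ u2 z := by
  obtain ⟨v, hv⟩ := (Submodule.mem_span_range_iff_exists_fun ℝ).mp (mem_span_Xe_mul_Xe p hp)
  refine ⟨v, fun z => ?_⟩
  simp [← hv, map_sum, eval_Xe, dotProduct, u2]

lemma sum_dotProduct_mul_eq_dotProduct_kron {ι κ : Type*} [Fintype ι] [Fintype κ]
    (v : ι → κ → ℝ) (x : ι → ℝ) (u : κ → ℝ) :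
    ∑ i, (v i ⬝ᵥ u) * x i = (fun q : ι × κ => v q.1 q.2) ⬝ᵥ kron x u := by
  simp only [dotProduct, kron, Fintype.sum_prod_type, Finset.sum_mul]
  exact Finset.sum_congr rfl fun _ _ => Finset.sum_congr rfl fun _ _ => by ring

lemma exists_eval_sum_mul_eq_dotProduct_kron {s K : ℕ} (h μ : Fin K → MvPolynomial (Fin s) ℝ)
    (hμ : ∀ k, (μ k).totalDegree ≤ 2) :
    ∃ w : Fin K × MonIdx s → ℝ, ∀ z,
      eval z (∑ k, μ k * h k) = w ⬝ᵥ kron (fun k => eval z (h k)) (u2 z) := by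
  choose v hv using fun k => exists_eval_eq_dotProduct_u2 (μ k) (hμ k)
  refine ⟨fun q => v q.1 q.2, fun z => ?_⟩
  simp only [map_sum, map_mul, hv, sum_dotProduct_mul_eq_dotProduct_kron]

lemma mul_sub_mul_eq_sum_mul {R ι : Type*} [CommRing R] (S : Finset ι) {x y a b : R}
    {g l l' : ι → R} (hx : x - a = ∑ k ∈ S, l k * g k) (hy : y - b = ∑ k ∈ S, l' k * g k) :
    x * y - a * b = ∑ k ∈ S, (x * l' k + b * l k) * g k := by
  calc x * y - a * b = x * (y - b) + b * (x - a) := by ring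
    _ = _ := by
      rw [hx, hy, Finset.mul_sum, Finset.mul_sum, ← Finset.sum_add_distrib]
      exact Finset.sum_congr rfl fun _ _ => by ring

lemma totalDegree_X_mul_add_C_mul_le {R σ : Type*} [CommSemiring R] [Nontrivial R] (i : σ)
    (b : R) {p q : MvPolynomial σ R} (hp : p.totalDegree ≤ 1) (hq : q.totalDegree ≤ 1) :
    (X i * p + C b * q).totalDegree ≤ 2 := by
  refine (totalDegree_add _ _).trans (max_le ?_ ?_)
  · exact (totalDegree_mul _ _).trans (by rw [totalDegree_X]; omega)
  · exact (totalDegree_mul _ _).trans (by rw [totalDegree_C]; omega)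

lemma exists_posSemidef_sum_sq {n ι : Type*} [Fintype n] (S : Finset ι) (g : ι → n → ℝ) :
    ∃ U : Matrix n n ℝ, U.PosSemidef ∧ ∀ x, ∑ i ∈ S, (g i ⬝ᵥ x) ^ 2 = x ⬝ᵥ (U *ᵥ x) := by
  let G : Matrix S n ℝ := Matrix.of fun i => g i
  refine ⟨Gᴴ * G, posSemidef_conjTranspose_mul_self G, fun x => ?_⟩
  rw [← mulVec_mulVec, dotProduct_mulVec, vecMul_conjTranspose, star_trivial,
    ← Finset.sum_coe_sort S]
  simp [dotProduct, G, mulVec, sq]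

theorem stmt12_general (s : ℕ) (c : Fin s → ℝ)
    (K : ℕ) (h : Fin K → MvPolynomial (Fin s) ℝ)
    (hlam : ∀ i : Fin s, ∃ lam : Fin K → MvPolynomial (Fin s) ℝ,
        (∀ k, (lam k).totalDegree ≤ 1) ∧
        MvPolynomial.X i - MvPolynomial.C (c i) = ∑ k, lam k * h k) :
    ∃ U : Matrix (Fin K × MonIdx s) (Fin K × MonIdx s) ℝ, U.PosSemidef ∧
      ∀ z : Fin s → ℝ,
        (∑ i, (z i - c i) ^ 2) +
            (∑ p ∈ Finset.univ.filter (fun p : Fin s × Fin s => p.1 ≤ p.2),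
              (z p.1 * z p.2 - c p.1 * c p.2) ^ 2) =
          kron (fun k => MvPolynomial.eval z (h k)) (u2 z) ⬝ᵥ
            (U *ᵥ kron (fun k => MvPolynomial.eval z (h k)) (u2 z)) := by
  choose lam hdeg hsum using hlam
  have hlin : ∀ i, ∃ w : Fin K × MonIdx s → ℝ, ∀ z,
      z i - c i = w ⬝ᵥ kron (fun k => eval z (h k)) (u2 z) := fun i => by
    simpa [← hsum i] using
      exists_eval_sum_mul_eq_dotProduct_kron h (lam i) fun k => (hdeg i k).trans one_le_two
  have hquad : ∀ i j, ∃ w : Fin K × MonIdx s → ℝ, ∀ z,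
      z i * z j - c i * c j = w ⬝ᵥ kron (fun k => eval z (h k)) (u2 z) := fun i j => by
    simpa [← mul_sub_mul_eq_sum_mul Finset.univ (hsum i) (hsum j)] using
      exists_eval_sum_mul_eq_dotProduct_kron h _ fun k =>
        totalDegree_X_mul_add_C_mul_le i (c j) (hdeg j k) (hdeg i k)
  choose w₁ hw₁ using hlin
  choose w₂ hw₂ using hquad
  obtain ⟨U₁, hU₁, hq₁⟩ := exists_posSemidef_sum_sq Finset.univ w₁
  obtain ⟨U₂, hU₂, hq₂⟩ := exists_posSemidef_sum_sq
    (Finset.univ.filter fun p : Fin s × Fin s => p.1 ≤ p.2) fun p => w₂ p.1 p.2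
  refine ⟨U₁ + U₂, hU₁.add hU₂, fun z => ?_⟩
  simp only [add_mulVec, dotProduct_add, ← hq₁, ← hq₂, hw₁, hw₂]

/-- under the hypotheses of STATEMENT 10 there is a positive semidefinite
`U ∈ ℝ^{KN×KN}` with
`Σ_i (z_i − c_i)² + Σ_{i ≤ j} (z_i z_j − c_i c_j)² = (h(z) ⊗ u₂(z))ᵀ U (h(z) ⊗ u₂(z))`. -/
theorem stmt12 (s : ℕ) (hs : 1 ≤ s) (c : Fin s → ℝ) (hc : ∀ i, c i ≠ 0)
    (K : ℕ) (h : Fin K → MvPolynomial (Fin s) ℝ) (a b : Fin K → Fin (s + 1))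
    (hform : ∀ k, h k = Xe (a k) * Xe (b k) - MvPolynomial.C (ce c (a k) * ce c (b k)))
    (hlam : ∀ i : Fin s, ∃ lam : Fin K → MvPolynomial (Fin s) ℝ,
        (∀ k, (lam k).totalDegree ≤ 1) ∧
        MvPolynomial.X i - MvPolynomial.C (c i) = ∑ k, lam k * h k) :
    ∃ U : Matrix (Fin K × MonIdx s) (Fin K × MonIdx s) ℝ, U.PosSemidef ∧
      ∀ z : Fin s → ℝ,
        (∑ i, (z i - c i) ^ 2) +
            (∑ p ∈ Finset.univ.filter (fun p : Fin s × Fin s => p.1 ≤ p.2),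
              (z p.1 * z p.2 - c p.1 * c p.2) ^ 2) =
          kron (fun k => MvPolynomial.eval z (h k)) (u2 z) ⬝ᵥ
            (U *ᵥ kron (fun k => MvPolynomial.eval z (h k)) (u2 z)) :=
  stmt12_general s c K h hlam
end
end

section
/- Let s, N, K, K̄ ≥ 1, let h : ℝ^s → ℝ^K and u₂ : ℝ^s → ℝ^N be (polynomial) maps, and let C ∈ ℝ^{K̄×K} be such that Cᵀ C is invertible. Define h̄(z) := C h(z). If U ∈ ℝ^{KN×KN} is positive semidefinite and p : ℝ^s → ℝ satisfies p(z) = (h(z) ⊗ u₂(z))ᵀ U (h(z) ⊗ u₂(z)) for all z ∈ ℝ^s, then there exists a positive semidefinite matrix Ū ∈ ℝ^{K̄N×K̄N} such that p(z) = (h̄(z) ⊗ u₂(z))ᵀ Ū (h̄(z) ⊗ u₂(z)) for all z ∈ ℝ^s. -/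
open Matrix

lemma kron_mulVec {K K' N : Type*} [Fintype K'] [Fintype N] [DecidableEq N]
    (D : Matrix K K' ℝ) (w : K' → ℝ) (u : N → ℝ) :
    (Matrix.kroneckerMap (· * ·) D (1 : Matrix N N ℝ)) *ᵥ kron w u
      = kron (D *ᵥ w) u := by
  funext ⟨k, t⟩
  simp only [Matrix.mulVec, dotProduct, kron, Fintype.sum_prod_type,
    Matrix.kroneckerMap_apply, Matrix.one_apply]
  simp only [mul_ite, mul_zero, ite_mul, zero_mul, Finset.sum_ite_eq,
    Finset.mem_univ, if_true]
  rw [Finset.sum_mul]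
  congr 1; funext k'; ring

/-- if `Cᵀ C` is invertible, `h̄(z) = C h(z)`, `U` is PSD and
`p(z) = (h(z) ⊗ u₂(z))ᵀ U (h(z) ⊗ u₂(z))`, then there is a PSD `Ū` with
`p(z) = (h̄(z) ⊗ u₂(z))ᵀ Ū (h̄(z) ⊗ u₂(z))` for all `z`. -/
theorem stmt17 (s N K Kb : ℕ) (hs : 1 ≤ s) (hN : 1 ≤ N) (hK : 1 ≤ K) (hKb : 1 ≤ Kb)
    (h : (Fin s → ℝ) → Fin K → ℝ) (u2f : (Fin s → ℝ) → Fin N → ℝ)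
    (C : Matrix (Fin Kb) (Fin K) ℝ) (hC : IsUnit (Cᵀ * C))
    (U : Matrix (Fin K × Fin N) (Fin K × Fin N) ℝ) (hU : U.PosSemidef)
    (p : (Fin s → ℝ) → ℝ)
    (hp : ∀ z, p z = kron (h z) (u2f z) ⬝ᵥ (U *ᵥ kron (h z) (u2f z))) :
    ∃ Ub : Matrix (Fin Kb × Fin N) (Fin Kb × Fin N) ℝ, Ub.PosSemidef ∧
      ∀ z, p z = kron (C *ᵥ h z) (u2f z) ⬝ᵥ (Ub *ᵥ kron (C *ᵥ h z) (u2f z)) := by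
  set D : Matrix (Fin K) (Fin Kb) ℝ := (Cᵀ * C)⁻¹ * Cᵀ with hD
  have hDC : D * C = 1 := by
    rw [hD, Matrix.mul_assoc, Matrix.nonsing_inv_mul _ ((Matrix.isUnit_iff_isUnit_det _).mp hC)]
  set M : Matrix (Fin K × Fin N) (Fin Kb × Fin N) ℝ :=
    Matrix.kroneckerMap (· * ·) D (1 : Matrix (Fin N) (Fin N) ℝ) with hM
  refine ⟨Mᵀ * U * M, ?_, ?_⟩
  · have := hU.conjTranspose_mul_mul_same M
    simpa using this
  · intro z
    have key : M *ᵥ kron (C *ᵥ h z) (u2f z) = kron (h z) (u2f z) := by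
      rw [hM, kron_mulVec, Matrix.mulVec_mulVec, hDC, Matrix.one_mulVec]
    rw [hp z]
    conv_rhs => rw [← Matrix.mulVec_mulVec, ← Matrix.mulVec_mulVec,
      Matrix.dotProduct_mulVec, Matrix.vecMul_transpose, key]
end
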